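/- For 0 < q < 1 and λ, x real with x ≠ 0, the (q,1)-Tricomi function satisfies the eigenvalue equation ∂_x (x · D_q C_0^{(q,1)}(λx)) = -λ C_0^{(q,1)}(λx), where D_q is the Jackson derivative acting on the x variable. -/

import Mathlib

/-!
Both sides are power series in `x` with infinite radius of convergence. Writing
`c n = (-λ)^n / (n! [n]_q!)`, so that `C_0^{(q,1)}(λx) = Σ c n x^n`, the Jackson derivative
multiplies the coefficient of `x^(n+1)` by `[n+1]_q` and lowers the degree; since
`[n+1]_q / [n+1]_q! = 1 / [n]_q!`, this gives `x · D_q C_0^{(q,1)}(λx) = -λ Σ c n x^(n+1) / (n+1)`,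
a term-by-term antiderivative of `-λ Σ c n x^n`.
-/

/-- The q-factorial `[n]_q! = ∏_{r=1}^n (1-q^r)/(1-q)`. -/
noncomputable def qFactorial (q : ℝ) (n : ℕ) : ℝ :=
  ∏ r ∈ Finset.Icc 1 n, (1 - q ^ r) / (1 - q)

/-- The (q,1)-Tricomi function `C_0^{(q,1)}(y) = Σ_r (-y)^r/(r! [r]_q!)`. -/
noncomputable def qTricomi (q y : ℝ) : ℝ :=
  ∑' r : ℕ, (-y) ^ r / (r.factorial * qFactorial q r)

open Nat

lemma hasDerivAt_tsum_mul_pow_succ_div {𝕜 : Type*} [RCLike 𝕜] {c : ℕ → 𝕜}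
    (hc : ∀ r : ℝ, Summable fun n => ‖c n‖ * r ^ n) (x : 𝕜) :
    HasDerivAt (fun t => ∑' n, c n * t ^ (n + 1) / (n + 1)) (∑' n, c n * x ^ n) x := by
  refine hasDerivAt_tsum_of_isPreconnected (g := fun n t => c n * t ^ (n + 1) / (n + 1))
    (g' := fun n t => c n * t ^ n) (hc (‖x‖ + 1)) Metric.isOpen_ball
    (convex_ball 0 (‖x‖ + 1)).isPreconnected (fun n y _ => ?_) (fun n y hy => ?_)
    (Metric.mem_ball_self (by positivity)) (by simp) (by simp)
  · refine (((hasDerivAt_pow (n + 1) y).const_mul (c n)).div_const (n + 1 : 𝕜)).congr_deriv ?_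
    have hn : (n + 1 : 𝕜) ≠ 0 := by exact_mod_cast n.succ_ne_zero
    push_cast
    field_simp
  · rw [mem_ball_zero_iff] at hy
    rw [norm_mul, norm_pow]
    gcongr

lemma qFactorial_succ (q : ℝ) (n : ℕ) :
    qFactorial q (n + 1) = qFactorial q n * ((1 - q ^ (n + 1)) / (1 - q)) := by
  rw [qFactorial, Finset.prod_Icc_succ_top (by omega), ← qFactorial]

lemma one_le_qFactorial {q : ℝ} (hq0 : 0 ≤ q) (hq1 : q < 1) (n : ℕ) :
    1 ≤ qFactorial q n := by
  refine Finset.one_le_prod fun r hr => ?_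
  have : q ^ r ≤ q := pow_le_of_le_one hq0 hq1.le (by simp at hr; omega)
  rw [le_div_iff₀ (by linarith)]
  linarith

lemma qFactorial_pos {q : ℝ} (hq0 : 0 ≤ q) (hq1 : q < 1) (n : ℕ) :
    0 < qFactorial q n := one_pos.trans_le (one_le_qFactorial hq0 hq1 n)

noncomputable def qTricomiCoeff (q l : ℝ) (n : ℕ) : ℝ :=
  (-l) ^ n / (n ! * qFactorial q n)

lemma qTricomi_mul_eq_tsum (q l x : ℝ) :
    qTricomi q (l * x) = ∑' n, qTricomiCoeff q l n * x ^ n :=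
  tsum_congr fun n => by rw [qTricomiCoeff, neg_mul_eq_neg_mul, mul_pow, div_mul_eq_mul_div]

lemma summable_norm_qTricomiCoeff_mul_pow {q : ℝ} (hq0 : 0 ≤ q) (hq1 : q < 1) (l r : ℝ) :
    Summable fun n => ‖qTricomiCoeff q l n‖ * r ^ n := by
  refine .of_norm_bounded (Real.summable_pow_div_factorial (|l| * |r|)) fun n => ?_
  have hfac : (0 : ℝ) < n ! := by positivity
  have hq := one_le_qFactorial hq0 hq1 n
  rw [qTricomiCoeff, norm_mul, norm_norm, norm_div, norm_pow, norm_pow, norm_neg, norm_mul,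
    Real.norm_natCast, Real.norm_of_nonneg (by positivity : 0 ≤ qFactorial q n), mul_pow,
    div_mul_eq_mul_div]
  exact div_le_div_of_nonneg_left (by positivity) hfac (le_mul_of_one_le_right hfac.le hq)

lemma qTricomiCoeff_succ_mul_qNumber {q : ℝ} (l : ℝ) {n : ℕ} (hq : qFactorial q (n + 1) ≠ 0) :
    qTricomiCoeff q l (n + 1) * ((1 - q ^ (n + 1)) / (1 - q))
      = -l * qTricomiCoeff q l n / (n + 1) := by
  rw [qFactorial_succ] at hq
  obtain ⟨hnum, hden⟩ := div_ne_zero_iff.mp (right_ne_zero_of_mul hq)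
  have hfac := left_ne_zero_of_mul hq
  rw [qTricomiCoeff, qTricomiCoeff, qFactorial_succ, factorial_succ]
  push_cast
  field_simp
  ring

lemma mul_qDiff_qTricomi_eq_tsum {q : ℝ} (hq0 : 0 ≤ q) (hq1 : q < 1) (l t : ℝ) :
    t * ((qTricomi q (l * t) - qTricomi q (l * (q * t))) / ((1 - q) * t))
      = -l * ∑' n, qTricomiCoeff q l n * t ^ (n + 1) / (n + 1) := by
  -- at `t = 0` both sides vanish, the left one only through `x / 0 = 0`
  rcases eq_or_ne t 0 with rfl | ht
  · simp
  rw [← div_div, mul_div_cancel₀ _ ht]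
  have hs (r : ℝ) : Summable fun n => qTricomiCoeff q l n * r ^ n :=
    .of_norm_bounded (summable_norm_qTricomiCoeff_mul_pow hq0 hq1 l |r|) fun n => by
      rw [norm_mul, norm_pow, Real.norm_eq_abs, Real.norm_eq_abs]
  rw [qTricomi_mul_eq_tsum, qTricomi_mul_eq_tsum, ← (hs t).tsum_sub (hs (q * t)),
    ← tsum_div_const, ← tsum_mul_left, (((hs t).sub (hs (q * t))).div_const _).tsum_eq_zero_add]
  simp only [pow_zero, mul_one, sub_self, zero_div, zero_add]
  refine tsum_congr fun n => ?_
  have hq := qTricomiCoeff_succ_mul_qNumber l (qFactorial_pos hq0 hq1 (n + 1)).ne'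
  linear_combination t ^ (n + 1) * hq

theorem qTricomi_eigen_general (q : ℝ) (hq0 : 0 < q) (hq1 : q < 1)
    (l x : ℝ) :
    deriv (fun t : ℝ =>
        t * ((qTricomi q (l * t) - qTricomi q (l * (q * t))) / ((1 - q) * t))) x
      = -l * qTricomi q (l * x) := by
  simp_rw [mul_qDiff_qTricomi_eq_tsum hq0.le hq1, qTricomi_mul_eq_tsum]
  exact ((hasDerivAt_tsum_mul_pow_succ_div
    (summable_norm_qTricomiCoeff_mul_pow hq0.le hq1 l) x).const_mul (-l)).deriv

theorem qTricomi_eigen (q : ℝ) (hq0 : 0 < q) (hq1 : q < 1)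
    (l x : ℝ) (hx : x ≠ 0) :
    deriv (fun t : ℝ =>
        t * ((qTricomi q (l * t) - qTricomi q (l * (q * t))) / ((1 - q) * t))) x
      = -l * qTricomi q (l * x) :=
  qTricomi_eigen_general q hq0 hq1 l x
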